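/- arXiv:2106.15474 — 7 statements merged into one kernel-verified Lean document; each statement's English description precedes it below -/
import Mathlib

section
/- Fix a real C ≥ 0 and set α = (2 + C)/6. Let N(θ) = 1 − (C/2)·(α·(1 − e^{−iθ}) + (1 − α)·(e^{iθ} − 1)) and D(θ) = 1 + C·(1 − e^{−iθ}) − (C/2)·(α·(e^{−iθ} − e^{−2iθ}) + (1 − α)·(1 − e^{−iθ})). Then the function θ ↦ N(θ)/D(θ) − exp(−iCθ) is O(θ⁴) as θ → 0; that is, with the choice α = (2 + |C|)/6 the semi-implicit scheme reproduces the exact amplification factor e^{−iCθ} of the constant-coefficient advection equation up to fourth order in θ, which expresses its third-order accuracy for constant velocity. -/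
open Asymptotics Filter

/-!
Multiplying out, `N(θ) − D(θ)·e^{−iCθ}` is a linear combination of the five exponentials
`e^{cθ}`, `c ∈ {i, −i, −iC, −i(1+C), −i(2+C)}`. Replacing each by its cubic Taylor polynomial
costs `O(θ⁴)`, and the resulting polynomial is exactly `−i·C(1+C)/2·(α − (2+C)/6)·θ³`, which
vanishes for `α = (2+C)/6`. Since `D(θ) → D(0) = 1`, dividing by `D` keeps the order `θ⁴`.
-/

noncomputable section

open Complex Topology Nat

def expRemainder (n : ℕ) (c : ℂ) (θ : ℝ) : ℂ :=
  exp (c * θ) - ∑ i ∈ Finset.range n, (c * θ) ^ i / i !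

lemma expRemainder_isBigO_pow (n : ℕ) (c : ℂ) :
    expRemainder n c =O[𝓝 0] (fun θ : ℝ => θ ^ n) := by
  have hc : Tendsto (fun θ : ℝ => c * θ) (𝓝 0) (𝓝 0) := by
    simpa using (continuous_ofReal.const_mul c).tendsto 0
  refine ((exp_sub_sum_range_isBigO_pow n).comp_tendsto hc).trans ?_
  refine .of_bound (‖c‖ ^ n) (Eventually.of_forall fun θ => ?_)
  simp [mul_pow, norm_pow]

lemma isBigO_div_sub_of_isBigO_sub_mul {α 𝕜 F : Type*} [NormedField 𝕜] [Norm F]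
    {l : Filter α} {f g h : α → 𝕜} {u : α → F} {d : 𝕜}
    (hg : Tendsto g l (𝓝 d)) (hd : d ≠ 0) (hfgh : (fun x => f x - g x * h x) =O[l] u) :
    (fun x => f x / g x - h x) =O[l] u := by
  have hinv : (fun x => (g x)⁻¹) =O[l] (fun _ => (1 : 𝕜)) := (hg.inv₀ hd).isBigO_one 𝕜
  have hdiv : (fun x => (f x - g x * h x) * (g x)⁻¹) =O[l] (fun x => f x - g x * h x) := by
    simpa using (isBigO_refl (fun x => f x - g x * h x) l).mul hinv
  refine (hdiv.trans hfgh).congr' ?_ EventuallyEq.rfl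
  filter_upwards [hg.eventually_ne hd] with x hx
  field_simp

def semiImplicitNum (C α θ : ℝ) : ℂ :=
  1 - ((C : ℂ) / 2) * ((α : ℂ) * (1 - exp (-I * θ)) + (1 - (α : ℂ)) * (exp (I * θ) - 1))

def semiImplicitDen (C α θ : ℝ) : ℂ :=
  1 + (C : ℂ) * (1 - exp (-I * θ)) -
    ((C : ℂ) / 2) * ((α : ℂ) * (exp (-I * θ) - exp (-2 * I * θ)) +
      (1 - (α : ℂ)) * (1 - exp (-I * θ)))

lemma semiImplicitDen_zero (C α : ℝ) : semiImplicitDen C α 0 = 1 := by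
  simp [semiImplicitDen]

lemma continuous_semiImplicitDen (C α : ℝ) : Continuous (semiImplicitDen C α) := by
  unfold semiImplicitDen
  fun_prop

lemma semiImplicitNum_sub_semiImplicitDen_mul_exp (C α θ : ℝ) :
    semiImplicitNum C α θ - semiImplicitDen C α θ * exp (-I * C * θ) =
      -(C / 2 * (1 - α)) * expRemainder 4 I θ + C / 2 * α * expRemainder 4 (-I) θ
        - (1 + C - C / 2 * (1 - α)) * expRemainder 4 (-I * C) θ
        + (C + C / 2 * α - C / 2 * (1 - α)) * expRemainder 4 (-I * (1 + C)) θ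
        - C / 2 * α * expRemainder 4 (-I * (2 + C)) θ
        - I * ((C * (1 + C) / 2 * (α - (2 + C) / 6) : ℝ) : ℂ) * θ ^ 3 := by
  have e1 : exp (-I * (1 + C) * θ) = exp (-I * θ) * exp (-I * C * θ) := by
    rw [← exp_add]
    ring_nf
  have e2 : exp (-I * (2 + C) * θ) = exp (-2 * I * θ) * exp (-I * C * θ) := by
    rw [← exp_add]
    ring_nf
  simp only [semiImplicitNum, semiImplicitDen, expRemainder, e1, e2, Finset.sum_range_succ,
    Finset.sum_range_zero]
  push_cast
  ring_nf
  simp only [I_pow_three]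
  ring

lemma semiImplicitNum_sub_semiImplicitDen_mul_exp_isBigO (C : ℝ) :
    (fun θ => semiImplicitNum C ((2 + C) / 6) θ
        - semiImplicitDen C ((2 + C) / 6) θ * exp (-I * C * θ)) =O[𝓝 0] (fun θ : ℝ => θ ^ 4) := by
  simp only [semiImplicitNum_sub_semiImplicitDen_mul_exp, sub_self, mul_zero, ofReal_zero,
    zero_mul, sub_zero]
  exact (((((expRemainder_isBigO_pow 4 I).const_mul_left _).add
    ((expRemainder_isBigO_pow 4 (-I)).const_mul_left _)).sub
    ((expRemainder_isBigO_pow 4 (-I * C)).const_mul_left _)).add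
    ((expRemainder_isBigO_pow 4 (-I * (1 + C))).const_mul_left _)).sub
    ((expRemainder_isBigO_pow 4 (-I * (2 + C))).const_mul_left _)

end

theorem semi_implicit_third_order_amplification_general (C : ℝ) :
    (fun θ : ℝ =>
        (1 - ((C : ℂ) / 2) *
            ((((2 + C) / 6 : ℝ) : ℂ) * (1 - Complex.exp (-Complex.I * θ)) +
              (1 - (((2 + C) / 6 : ℝ) : ℂ)) * (Complex.exp (Complex.I * θ) - 1))) /
          (1 + (C : ℂ) * (1 - Complex.exp (-Complex.I * θ)) -
            ((C : ℂ) / 2) *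
            ((((2 + C) / 6 : ℝ) : ℂ) *
                (Complex.exp (-Complex.I * θ) - Complex.exp (-2 * Complex.I * θ)) +
              (1 - (((2 + C) / 6 : ℝ) : ℂ)) * (1 - Complex.exp (-Complex.I * θ)))) -
          Complex.exp (-Complex.I * C * θ))
      =O[nhds 0] (fun θ : ℝ => θ ^ 4) := by
  have hden : Tendsto (semiImplicitDen C ((2 + C) / 6)) (nhds 0) (nhds 1) := by
    simpa [semiImplicitDen_zero] using (continuous_semiImplicitDen C ((2 + C) / 6)).tendsto 0
  exact isBigO_div_sub_of_isBigO_sub_mul hden one_ne_zero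
    (semiImplicitNum_sub_semiImplicitDen_mul_exp_isBigO C)

/-- With the choice `α = (2 + C)/6`, the amplification factor `N(θ)/D(θ)` of the
parametric semi-implicit scheme reproduces the exact amplification factor
`exp(−iCθ)` of the constant-coefficient advection equation up to `O(θ⁴)` as
`θ → 0`, expressing third-order accuracy for constant velocity. -/
theorem semi_implicit_third_order_amplification (C : ℝ) (hC : 0 ≤ C) :
    (fun θ : ℝ =>
        (1 - ((C : ℂ) / 2) *
            ((((2 + C) / 6 : ℝ) : ℂ) * (1 - Complex.exp (-Complex.I * θ)) +
              (1 - (((2 + C) / 6 : ℝ) : ℂ)) * (Complex.exp (Complex.I * θ) - 1))) /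
          (1 + (C : ℂ) * (1 - Complex.exp (-Complex.I * θ)) -
            ((C : ℂ) / 2) *
            ((((2 + C) / 6 : ℝ) : ℂ) *
                (Complex.exp (-Complex.I * θ) - Complex.exp (-2 * Complex.I * θ)) +
              (1 - (((2 + C) / 6 : ℝ) : ℂ)) * (1 - Complex.exp (-Complex.I * θ)))) -
          Complex.exp (-Complex.I * C * θ))
      =O[nhds 0] (fun θ : ℝ => θ ^ 4) :=
  semi_implicit_third_order_amplification_general C
end

section
/- Fix reals C > 0 and α, and let Φ_{i−2}^{n+1}, Φ_{i−1}^{n+1}, Φ_i^{n+1}, Φ_{i−1}^n, Φ_i^n, Φ_{i+1}^n be arbitrary reals. Then the conservative-scheme equation (2 + (1 + α)C)·Φ_i^{n+1} = 2Φ_i^n + C·(αΦ_{i−1}^{n+1} − αΦ_i^n − (1 − α)Φ_{i+1}^n) + C·((1 + α)Φ_{i−1}^{n+1} − αΦ_{i−2}^{n+1} + αΦ_{i−1}^n + (1 − α)Φ_i^n) holds if and only if the non-conservative-scheme equation Φ_i^{n+1} + C·(Φ_i^{n+1} − Φ_{i−1}^{n+1} − (1/2)(α(Φ_{i−1}^{n+1}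 − Φ_{i−2}^{n+1}) + (1 − α)(Φ_i^{n+1} − Φ_{i−1}^{n+1}))) = Φ_i^n − (C/2)(α(Φ_i^n − Φ_{i−1}^n) + (1 − α)(Φ_{i+1}^n − Φ_i^n)) holds. Hence for constant velocity the second-order semi-implicit conservative scheme is equivalent to the second-order semi-implicit non-conservative scheme. -/
/-- For constant velocity (constant Courant number `C > 0`), the second-order
semi-implicit conservative scheme is equivalent to the second-order
semi-implicit non-conservative scheme: the two defining linear relations hold
simultaneously. -/
theorem conservative_iff_nonconservative
    (C α : ℝ) (hC : 0 < C)
    (Φim2 Φim1 Φi : ℝ)      -- Φ_{i-2}^{n+1}, Φ_{i-1}^{n+1}, Φ_i^{n+1}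
    (Ψim1 Ψi Ψip1 : ℝ) :    -- Φ_{i-1}^n,     Φ_i^n,       Φ_{i+1}^n
    ((2 + (1 + α) * C) * Φi =
        2 * Ψi + C * (α * Φim1 - α * Ψi - (1 - α) * Ψip1) +
          C * ((1 + α) * Φim1 - α * Φim2 + α * Ψim1 + (1 - α) * Ψi)) ↔
    (Φi + C * (Φi - Φim1 -
        (1 / 2) * (α * (Φim1 - Φim2) + (1 - α) * (Φi - Φim1))) =
      Ψi - (C / 2) * (α * (Ψi - Ψim1) + (1 - α) * (Ψip1 - Ψi))) := by
  constructor <;> intro h <;> nlinarith [h]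
end

section
/- Let x : ℝ → ℝ be differentiable with x'(t) = 2 + sin(x(t)) for every t ∈ ℝ. Then x(t + 2π/√3) = x(t) + 2π for every t ∈ ℝ. -/
/-!
A continuous antiderivative `F` of `1/(2 + sin y)` on all of `ℝ` satisfies
`F (y + 2π) = F y + 2π/√3`. Along a solution of `x' = 2 + sin x` the quantity `F (x t) - t` is
constant, so `F (x (t + 2π/√3)) = F (x t + 2π)`, and `F` is strictly increasing.
-/

open Real

section Autonomous

variable {F v x : ℝ → ℝ}

theorem antideriv_comp_sub_self_eq (hF : ∀ y, HasDerivAt F (v y)⁻¹ y) (hv : ∀ y, v y ≠ 0)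
    (hx : ∀ t, HasDerivAt x (v (x t)) t) (a b : ℝ) : F (x a) - a = F (x b) - b := by
  have hconst : ∀ t, HasDerivAt (fun u ↦ F (x u) - u) 0 t := fun t ↦ by
    have h := ((hF (x t)).comp t (hx t)).sub (hasDerivAt_id' t)
    rwa [inv_mul_cancel₀ (hv (x t)), sub_self] at h
  exact is_const_of_deriv_eq_zero (fun t ↦ (hconst t).differentiableAt)
    (fun t ↦ (hconst t).deriv) a b

theorem apply_add_eq_of_antideriv_add (hF : ∀ y, HasDerivAt F (v y)⁻¹ y) (hv : ∀ y, 0 < v y)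
    (hx : ∀ t, HasDerivAt x (v (x t)) t) {p T : ℝ} (hFp : ∀ y, F (y + p) = F y + T) (t : ℝ) :
    x (t + T) = x t + p := by
  have hmono : StrictMono F := strictMono_of_hasDerivAt_pos hF fun y ↦ inv_pos.2 (hv y)
  apply hmono.injective
  have := antideriv_comp_sub_self_eq hF (fun y ↦ (hv y).ne') hx (t + T) t
  rw [hFp]
  linarith

end Autonomous

/-- The continuous antiderivative of `1 / (2 + sin y)`; unlike the textbook
`(2/√3) arctan ((2 tan (y/2) + 1)/√3)` it has no jumps at the odd multiples of `π`. -/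
noncomputable def charAntideriv (y : ℝ) : ℝ :=
  y / √3 + 2 / √3 * arctan (cos y / (sin y + 2 + √3))

theorem two_add_sin_pos (y : ℝ) : 0 < 2 + sin y := by
  linarith [neg_one_le_sin y]

theorem hasDerivAt_charAntideriv (y : ℝ) : HasDerivAt charAntideriv (2 + sin y)⁻¹ y := by
  have hsqrt3_pos : 0 < √3 := by positivity
  have hsqrt3_sq : √3 * √3 = 3 := mul_self_sqrt (by norm_num)
  have hd : 0 < sin y + 2 + √3 := by linarith [neg_one_le_sin y]
  have hquot : HasDerivAt (fun z ↦ cos z / (sin z + 2 + √3))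
      ((-sin y * (sin y + 2 + √3) - cos y * cos y) / (sin y + 2 + √3) ^ 2) y :=
    (hasDerivAt_cos y).div (((hasDerivAt_sin y).add_const 2).add_const √3) hd.ne'
  refine (((hasDerivAt_id' y).div_const √3).add
    (((hasDerivAt_arctan _).comp y hquot).const_mul (2 / √3))).congr_deriv ?_
  have hsq : 1 + (cos y / (sin y + 2 + √3)) ^ 2
      = 2 * (2 + √3) * (2 + sin y) / (sin y + 2 + √3) ^ 2 := by
    field_simp
    nlinarith [sin_sq_add_cos_sq y]
  rw [hsq]
  have := two_add_sin_pos y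
  field_simp
  linear_combination -hsqrt3_sq - sin_sq_add_cos_sq y

theorem charAntideriv_add_two_pi (y : ℝ) :
    charAntideriv (y + 2 * π) = charAntideriv y + 2 * π / √3 := by
  simp only [charAntideriv, sin_add_two_pi, cos_add_two_pi]
  ring

/-- Every solution of the characteristic ODE `x' = 2 + sin x` advances by
exactly one spatial period `2π` over the time interval `2π/√3`. -/
theorem characteristic_period_advance
    (x : ℝ → ℝ) (hx : Differentiable ℝ x)
    (hode : ∀ t : ℝ, deriv x t = 2 + Real.sin (x t)) :
    ∀ t : ℝ, x (t + 2 * π / Real.sqrt 3) = x t + 2 * π := by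
  have hsol : ∀ t, HasDerivAt x (2 + sin (x t)) t := fun t ↦ hode t ▸ (hx t).hasDerivAt
  exact apply_add_eq_of_antideriv_add hasDerivAt_charAntideriv two_add_sin_pos hsol
    charAntideriv_add_two_pi
end

section
/- Let φ : ℝ × ℝ → ℝ be differentiable and satisfy ∂_t φ(x, t) + (2 + sin x) ∂_x φ(x, t) = 0 for all (x, t) ∈ ℝ². Then φ(x, t + 2π/√3) = φ(x − 2π, t) for all (x, t) ∈ ℝ². In particular, with initial condition φ(x, 0) = φ⁰(x), the exact solution at the final time T = 2π/√3 is φ(x, T) = φ⁰(x − 2π). -/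
open Real

/-!
The solution is constant along the characteristics. Instead of following the characteristic
`x'(s) = 2 + sin x(s)` in time, parametrize it by position: it is the graph `y ↦ (y, t + F y - F a)`
of a primitive `F` of `1 / (2 + sin y)`, and `φ` is constant along it. Since `1 / (2 + sin y)` has
mean `1 / √3`, the primitive satisfies `F (y + 2π) = F y + 2π / √3`, so the characteristic through
`(x - 2π, t)` passes through `(x, t + 2π / √3)`.
-/

theorem HasDerivAt.arctan_div {f g : ℝ → ℝ} {f' g' x : ℝ} (hf : HasDerivAt f f' x)
    (hg : HasDerivAt g g' x) (hx : g x ≠ 0) :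
    HasDerivAt (fun y => Real.arctan (f y / g y))
      ((f' * g x - f x * g') / (f x ^ 2 + g x ^ 2)) x := by
  refine (hf.div hg hx).arctan.congr_deriv ?_
  rw [Pi.div_apply]
  field_simp
  ring

theorem DifferentiableAt.fderiv_apply_prod {𝕜 E : Type*} [NontriviallyNormedField 𝕜]
    [NormedAddCommGroup E] [NormedSpace 𝕜 E] {φ : 𝕜 × 𝕜 → E} {x t : 𝕜}
    (h : DifferentiableAt 𝕜 φ (x, t)) (a b : 𝕜) :
    fderiv 𝕜 φ (x, t) (a, b) =
      a • deriv (fun u => φ (u, t)) x + b • deriv (fun s => φ (x, s)) t := by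
  have hx : HasDerivAt (fun u => φ (u, t)) (fderiv 𝕜 φ (x, t) (1, 0)) x :=
    h.hasFDerivAt.comp_hasDerivAt x ((hasDerivAt_id x).prodMk (hasDerivAt_const x t))
  have ht : HasDerivAt (fun s => φ (x, s)) (fderiv 𝕜 φ (x, t) (0, 1)) t :=
    h.hasFDerivAt.comp_hasDerivAt t ((hasDerivAt_const t x).prodMk (hasDerivAt_id t))
  have hab : ((a, b) : 𝕜 × 𝕜) = a • (1, 0) + b • (0, 1) := by simp
  rw [hx.deriv, ht.deriv, hab, map_add, map_smul, map_smul]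

theorem transport_solution_eq_on_characteristic {φ : ℝ × ℝ → ℝ} (hφ : Differentiable ℝ φ)
    {v F : ℝ → ℝ} (hv : ∀ x, v x ≠ 0) (hF : ∀ x, HasDerivAt F (v x)⁻¹ x)
    (hpde : ∀ x t, deriv (fun s => φ (x, s)) t + v x * deriv (fun u => φ (u, t)) x = 0)
    (a b t : ℝ) : φ (b, t + (F b - F a)) = φ (a, t) := by
  let γ : ℝ → ℝ × ℝ := fun y => (y, t + (F y - F a))
  have hconst : ∀ y, HasDerivAt (φ ∘ γ) 0 y := by
    intro y
    have hγ : HasDerivAt γ (1, (v y)⁻¹) y :=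
      (hasDerivAt_id y).prodMk (((hF y).sub_const (F a)).const_add t)
    refine ((hφ (γ y)).hasFDerivAt.comp_hasDerivAt y hγ).congr_deriv ?_
    have hpde_y := hpde y (t + (F y - F a))
    rw [(hφ (γ y)).fderiv_apply_prod, smul_eq_mul, smul_eq_mul]
    field_simp [hv y]
    linear_combination hpde_y
  simpa [γ] using is_const_of_deriv_eq_zero (fun y => (hconst y).differentiableAt)
    (fun y => (hconst y).deriv) b a

/-- The textbook primitive `(2/√3) arctan ((2 tan (x/2) + 1) / √3)` jumps at odd multiples of `π`;
subtracting `x / √3 = (2/√3) arctan (tan (x/2))` and applying the arctangent subtraction formula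
gives the `2π`-periodic arctangent term below, which is smooth because its denominator is
positive. -/
noncomputable def antiderivInvTwoAddSin (x : ℝ) : ℝ :=
  x / √3 + 2 / √3 *
    arctan (((2 - √3) * sin x + 1 + cos x) / (2 + √3 + (√3 - 2) * cos x + sin x))

theorem antiderivInvTwoAddSin_add_two_pi (x : ℝ) :
    antiderivInvTwoAddSin (x + 2 * π) = antiderivInvTwoAddSin x + 2 * π / √3 := by
  simp only [antiderivInvTwoAddSin, sin_add_two_pi, cos_add_two_pi]
  ring

theorem hasDerivAt_antiderivInvTwoAddSin (x : ℝ) :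
    HasDerivAt antiderivInvTwoAddSin (2 + sin x)⁻¹ x := by
  have hr : √3 ^ 2 = 3 := sq_sqrt (by norm_num)
  have hr_gt : 1 < √3 := lt_sqrt_of_sq_lt (by norm_num)
  have hr_lt : √3 < 2 := (sqrt_lt' two_pos).2 (by norm_num)
  have hsc := sin_sq_add_cos_sq x
  have hN : HasDerivAt (fun y => (2 - √3) * sin y + 1 + cos y)
      ((2 - √3) * cos x - sin x) x :=
    (((hasDerivAt_sin x).const_mul _).add_const 1).add (hasDerivAt_cos x) |>.congr_deriv (by ring)
  have hD : HasDerivAt (fun y => 2 + √3 + (√3 - 2) * cos y + sin y)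
      ((2 - √3) * sin x + cos x) x :=
    (((hasDerivAt_cos x).const_mul _).const_add _).add (hasDerivAt_sin x) |>.congr_deriv (by ring)
  have hD_pos : 0 < 2 + √3 + (√3 - 2) * cos x + sin x := by
    nlinarith [neg_one_le_sin x,
      mul_nonneg (sub_nonneg.2 hr_lt.le) (sub_nonneg.2 (cos_le_one x))]
  have hsum_sq : ((2 - √3) * sin x + 1 + cos x) ^ 2 + (2 + √3 + (√3 - 2) * cos x + sin x) ^ 2
      = 8 * (2 + sin x) := by
    linear_combination (8 - 4 * √3) * hsc + (1 + 2 * cos x + cos x ^ 2 + sin x ^ 2) * hr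
  have hwronskian : ((2 - √3) * cos x - sin x) * (2 + √3 + (√3 - 2) * cos x + sin x)
      - ((2 - √3) * sin x + 1 + cos x) * ((2 - √3) * sin x + cos x) = 4 * (√3 - 2 - sin x) := by
    linear_combination (4 * √3 - 8) * hsc - (cos x + cos x ^ 2 + sin x ^ 2) * hr
  have hs_pos : 0 < 2 + sin x := by linarith [neg_one_le_sin x]
  refine ((hasDerivAt_id x).div_const √3 |>.add
    ((hN.arctan_div hD hD_pos.ne').const_mul (2 / √3))).congr_deriv ?_
  rw [hsum_sq, hwronskian]
  field_simp
  ring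

/-- For the advection equation `∂ₜφ + (2 + sin x) ∂ₓφ = 0`, the solution is
shifted by one spatial period `2π` over the time interval `2π/√3`:
`φ(x, t + 2π/√3) = φ(x − 2π, t)`.  In particular `φ(x, T) = φ⁰(x − 2π)` for
`T = 2π/√3`. -/
theorem advection_solution_period_shift
    (φ : ℝ × ℝ → ℝ) (hφ : Differentiable ℝ φ)
    (hpde : ∀ x t : ℝ,
      deriv (fun s => φ (x, s)) t +
        (2 + Real.sin x) * deriv (fun u => φ (u, t)) x = 0) :
    ∀ x t : ℝ, φ (x, t + 2 * π / Real.sqrt 3) = φ (x - 2 * π, t) := by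
  intro x t
  have h := transport_solution_eq_on_characteristic hφ (v := fun y => 2 + sin y)
    (fun y => (by linarith [neg_one_le_sin y] : 0 < 2 + sin y).ne')
    hasDerivAt_antiderivInvTwoAddSin hpde
    (x - 2 * π) (x - 2 * π + 2 * π) t
  rwa [antiderivInvTwoAddSin_add_two_pi, add_sub_cancel_left, sub_add_cancel] at h
end

section
/- Define φ(x, t) = sin(2·arctan(e^{−t}·tan(x/2))) for x ∈ (−π, π) and t ∈ ℝ. Then φ(x, 0) = sin x for all x ∈ (−π, π), and φ satisfies the advection equation ∂_t φ(x, t) + sin(x)·∂_x φ(x, t) = 0 for all x ∈ (−π, π) and t ∈ ℝ. -/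
/-!
With `ξ(x) = tan (x / 2)` one has `sin x · ξ'(x) = ξ(x)`, so `ξ` grows like `eᵗ` along the flow
of `ẋ = sin x` and `e^{-t} ξ(x)` is constant along the characteristics. Hence every function of
`e^{-t} ξ(x)` solves `∂ₜφ + sin x · ∂ₓφ = 0`; the choice `F(y) = sin (2 arctan y)` matches the
initial datum because `arctan ∘ tan = id` on `(-π/2, π/2)`.
-/

open Real

theorem deriv_add_mul_deriv_comp_exp_neg_mul_eq_zero {F ξ v : ℝ → ℝ} {x t F' ξ' : ℝ}
    (hF : HasDerivAt F F' (exp (-t) * ξ x)) (hξ : HasDerivAt ξ ξ' x) (hv : v x * ξ' = ξ x) :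
    deriv (fun s => F (exp (-s) * ξ x)) t + v x * deriv (fun u => F (exp (-t) * ξ u)) x = 0 := by
  have hs : HasDerivAt (fun s => F (exp (-s) * ξ x)) (F' * (exp (-t) * -1 * ξ x)) t :=
    hF.comp t (((hasDerivAt_neg t).exp).mul_const (ξ x))
  have hu : HasDerivAt (fun u => F (exp (-t) * ξ u)) (F' * (exp (-t) * ξ')) x :=
    hF.comp x (hξ.const_mul (exp (-t)))
  rw [hs.deriv, hu.deriv]
  linear_combination F' * exp (-t) * hv

theorem hasDerivAt_tan_div_two {x : ℝ} (hx : cos (x / 2) ≠ 0) :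
    HasDerivAt (fun u => tan (u / 2)) (1 / (2 * cos (x / 2) ^ 2)) x := by
  have h := (hasDerivAt_tan hx).comp x ((hasDerivAt_id x).div_const 2)
  exact h.congr_deriv (by ring)

theorem sin_mul_one_div_two_mul_cos_div_two_sq (x : ℝ) :
    sin x * (1 / (2 * cos (x / 2) ^ 2)) = tan (x / 2) := by
  have hsin : sin x = 2 * sin (x / 2) * cos (x / 2) := by
    rw [← sin_two_mul]
    ring_nf
  rcases eq_or_ne (cos (x / 2)) 0 with hcos | hcos
  · simp [tan_eq_sin_div_cos, hcos]
  · rw [hsin, tan_eq_sin_div_cos]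
    field_simp

/-- The function `φ(x, t) = sin(2·arctan(e^{−t}·tan(x/2)))` satisfies
`φ(x, 0) = sin x` and solves the advection equation
`∂ₜφ + sin(x)·∂ₓφ = 0` on `(−π, π) × ℝ`. -/
theorem exact_solution_1d_sine_velocity :
    (∀ x : ℝ, -π < x → x < π →
      Real.sin (2 * Real.arctan (Real.exp (-(0 : ℝ)) * Real.tan (x / 2))) =
        Real.sin x) ∧
    (∀ x t : ℝ, -π < x → x < π →
      deriv (fun s : ℝ =>
          Real.sin (2 * Real.arctan (Real.exp (-s) * Real.tan (x / 2)))) t +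
        Real.sin x *
          deriv (fun u : ℝ =>
            Real.sin (2 * Real.arctan (Real.exp (-t) * Real.tan (u / 2)))) x
        = 0) := by
  constructor
  · intro x hx₁ hx₂
    rw [neg_zero, exp_zero, one_mul, arctan_tan (by linarith) (by linarith),
      mul_div_cancel₀ x two_ne_zero]
  · intro x t hx₁ hx₂
    have hcos : cos (x / 2) ≠ 0 := (cos_pos_of_mem_Ioo ⟨by linarith, by linarith⟩).ne'
    have hF : ∀ y, HasDerivAt (fun y => sin (2 * arctan y))
        (cos (2 * arctan y) * (2 * (1 / (1 + y ^ 2)))) y := fun y =>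
      (hasDerivAt_sin _).comp y ((hasDerivAt_arctan y).const_mul 2)
    exact deriv_add_mul_deriv_comp_exp_neg_mul_eq_zero (hF _) (hasDerivAt_tan_div_two hcos)
      (sin_mul_one_div_two_mul_cos_div_two_sq x)
end

section
/- Define φ(x, y, t) = sin(2·arctan(e^{−2πt}·tan(π(x + y)/2))) on the strip S = {(x, y) : |x + y| < 1} and t ∈ ℝ. Then φ(x, y, 0) = sin(π(x + y)) on S, and φ satisfies the two-dimensional advection equation ∂_t φ + sin(π(x + y))·(∂_x φ + ∂_y φ) = 0 for all (x, y) ∈ S and t ∈ ℝ. -/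
/-!
With `s = x + y` and `h(s) = tan(π s / 2)`, the velocity satisfies `2 sin(π s) h'(s) = 2π h(s)`,
because `sin(2θ) / cos² θ = 2 tan θ`. Hence `e^{-2πt} h(x + y)` is constant along the
characteristics of `∂ₜ + sin(π(x + y)) (∂ₓ + ∂ᵧ)`, and so is `φ`, a function of it. At `t = 0`,
`arctan` inverts `tan` on `(-π/2, π/2)`, which is where the strip `|x + y| < 1` is sent.
-/

open Real

theorem sin_two_mul_div_cos_sq (θ : ℝ) : sin (2 * θ) / cos θ ^ 2 = 2 * tan θ := by
  rw [sin_two_mul, tan_eq_sin_div_cos]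
  rcases eq_or_ne (cos θ) 0 with hcos | hcos
  · simp [hcos]
  · field_simp

theorem mem_Ioo_pi_mul_div_two {s : ℝ} (hs : |s| < 1) :
    π * s / 2 ∈ Set.Ioo (-(π / 2)) (π / 2) := by
  obtain ⟨hlo, hhi⟩ := abs_lt.mp hs
  constructor <;> nlinarith [pi_pos]

theorem hasDerivAt_tan_pi_mul_div_two {s : ℝ} (hs : |s| < 1) :
    HasDerivAt (fun σ => tan (π * σ / 2)) (π / 2 / cos (π * s / 2) ^ 2) s := by
  have hcos : cos (π * s / 2) ≠ 0 := (cos_pos_of_mem_Ioo (mem_Ioo_pi_mul_div_two hs)).ne'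
  have hlin : HasDerivAt (fun σ => π * σ / 2) (π / 2) s := by
    simpa using ((hasDerivAt_id s).const_mul π).div_const 2
  refine ((hasDerivAt_tan hcos).comp s hlin).congr_deriv ?_
  ring

theorem deriv_add_mul_deriv_of_characteristic {G h : ℝ → ℝ} {h' v k s t : ℝ}
    (hG : DifferentiableAt ℝ G (exp (-(k * t)) * h s)) (hh : HasDerivAt h h' s)
    (hv : v * h' = k * h s) :
    deriv (fun τ => G (exp (-(k * τ)) * h s)) t +
      v * deriv (fun σ => G (exp (-(k * t)) * h σ)) s = 0 := by
  have hlin : HasDerivAt (fun τ => -(k * τ)) (-k) t := by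
    simpa using ((hasDerivAt_id t).const_mul k).fun_neg
  have hτ : HasDerivAt (fun τ => G (exp (-(k * τ)) * h s))
      (deriv G (exp (-(k * t)) * h s) * (exp (-(k * t)) * -k * h s)) t :=
    hG.hasDerivAt.comp t (hlin.exp.mul_const (h s))
  have hσ : HasDerivAt (fun σ => G (exp (-(k * t)) * h σ))
      (deriv G (exp (-(k * t)) * h s) * (exp (-(k * t)) * h')) s :=
    hG.hasDerivAt.comp s (hh.const_mul _)
  rw [hτ.deriv, hσ.deriv]
  linear_combination deriv G (exp (-(k * t)) * h s) * exp (-(k * t)) * hv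

theorem deriv_comp_add_add_deriv_comp_add (Φ : ℝ → ℝ) (x y : ℝ) :
    deriv (fun u => Φ (u + y)) x + deriv (fun w => Φ (x + w)) y = 2 * deriv Φ (x + y) := by
  rw [deriv_comp_add_const, deriv_comp_const_add]
  ring

/-- The function `φ(x, y, t) = sin(2·arctan(e^{−2πt}·tan(π(x+y)/2)))` satisfies
`φ(x, y, 0) = sin(π(x+y))` and solves the two-dimensional advection equation
`∂ₜφ + sin(π(x+y))·(∂ₓφ + ∂ᵧφ) = 0` on the strip `|x + y| < 1`. -/
theorem exact_solution_2d_diagonal_velocity :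
    (∀ x y : ℝ, |x + y| < 1 →
      Real.sin (2 * Real.arctan
          (Real.exp (-(2 * π * (0 : ℝ))) * Real.tan (π * (x + y) / 2))) =
        Real.sin (π * (x + y))) ∧
    (∀ x y t : ℝ, |x + y| < 1 →
      deriv (fun s : ℝ =>
          Real.sin (2 * Real.arctan
            (Real.exp (-(2 * π * s)) * Real.tan (π * (x + y) / 2)))) t +
        Real.sin (π * (x + y)) *
          (deriv (fun u : ℝ =>
              Real.sin (2 * Real.arctan
                (Real.exp (-(2 * π * t)) * Real.tan (π * (u + y) / 2)))) x +
            deriv (fun w : ℝ =>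
              Real.sin (2 * Real.arctan
                (Real.exp (-(2 * π * t)) * Real.tan (π * (x + w) / 2)))) y)
        = 0) := by
  constructor
  · intro x y hs
    obtain ⟨hlo, hhi⟩ := mem_Ioo_pi_mul_div_two hs
    rw [mul_zero, neg_zero, exp_zero, one_mul, arctan_tan hlo hhi]
    congr 1
    ring
  · intro x y t hs
    rw [deriv_comp_add_add_deriv_comp_add
      (fun σ => sin (2 * arctan (exp (-(2 * π * t)) * tan (π * σ / 2)))), ← mul_assoc]
    refine deriv_add_mul_deriv_of_characteristic (G := fun z => sin (2 * arctan z))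
      ((differentiable_arctan _).const_mul 2).sin (hasDerivAt_tan_pi_mul_div_two hs) ?_
    have hvelocity := sin_two_mul_div_cos_sq (π * (x + y) / 2)
    rw [show 2 * (π * (x + y) / 2) = π * (x + y) by ring] at hvelocity
    linear_combination π * hvelocity
end

section
/- Let v > 0 and α be fixed reals, and let φ : ℝ × ℝ → ℝ be three times continuously differentiable with ∂_t φ + v·∂_x φ = 0 everywhere. Fix (x, t) ∈ ℝ², and for h, τ > 0 set C = vτ/h and define the scheme residual R(h, τ) = φ(x, t+τ) − φ(x, t) + C·(φ(x, t+τ) − φ(x−h, t+τ)) − (C/2)·(α·(φ(x−h, t+τ) − φ(x−2h, t+τ)) + (1−α)·(φ(x, t+τ) − φ(x−h, t+τ))) + (C/2)·(α·(φ(x, t) − φ(x−h, t)) + (1−α)·(φ(x+h, t) − φ(x, t))). Then R(h, τ) = O((|h| + |τ|)³) as (h, τ) → (0, 0) with h, τ > 0; that is, the parametric semi-implicit scheme is second-order consistent for every value of the parameter α. -/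
/-!
A solution of `∂ₜφ + v ∂ₓφ = 0` is a travelling wave, `φ (y, t + τ) = φ (y - v τ, t)`, so the
residual is a linear functional of the profile `f = φ (·, t)`, sampled at `x`, `x ± h`, `x - s`,
`x - h - s`, `x - 2h - s` with `s = v τ`. The scheme is exact on quadratic polynomials, so `f` may
be replaced by its Taylor remainder `g = f - P₂` at `x`. The residual of `g` consists of
`g (x - s) - g x` and of differences of `g` with step `h` weighted by `s / h`; by the mean value
theorem it is at most a constant times `s · sup |g'|` on the ball of radius `2|h| + |s|`, and
`g' y = O((y - x)²)` there.
-/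

open Asymptotics Filter Metric Topology

theorem fderiv_characteristic_eq_zero {φ : ℝ × ℝ → ℝ} {v : ℝ} (hφ : Differentiable ℝ φ)
    (hpde : ∀ x t : ℝ, deriv (fun s => φ (x, s)) t + v * deriv (fun u => φ (u, t)) x = 0)
    (p : ℝ × ℝ) : fderiv ℝ φ p (v, 1) = 0 := by
  obtain ⟨x, t⟩ := p
  have hx : HasDerivAt (fun u => φ (u, t)) (fderiv ℝ φ (x, t) (1, 0)) x :=
    (hφ _).hasFDerivAt.comp_hasDerivAt x ((hasDerivAt_id x).prodMk (hasDerivAt_const x t))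
  have ht : HasDerivAt (fun s => φ (x, s)) (fderiv ℝ φ (x, t) (0, 1)) t :=
    (hφ _).hasFDerivAt.comp_hasDerivAt t ((hasDerivAt_const t x).prodMk (hasDerivAt_id t))
  have hsplit : ((v, 1) : ℝ × ℝ) = v • (1, 0) + (0, 1) := by simp
  rw [hsplit, map_add, map_smul, smul_eq_mul, ← hx.deriv, ← ht.deriv, ← hpde x t, add_comm]

theorem transport_time_shift {φ : ℝ × ℝ → ℝ} {v : ℝ} (hφ : Differentiable ℝ φ)
    (hpde : ∀ x t : ℝ, deriv (fun s => φ (x, s)) t + v * deriv (fun u => φ (u, t)) x = 0)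
    (a t τ : ℝ) : φ (a, t + τ) = φ (a - v * τ, t) := by
  set ψ : ℝ → ℝ := fun r => φ (a - v * τ + v * r, t + r)
  have hψ : ∀ r, HasDerivAt ψ 0 r := fun r => by
    have hline : HasDerivAt (fun r : ℝ => (a - v * τ + v * r, t + r)) (v, 1) r :=
      (((hasDerivAt_id' r).const_mul v).const_add _).prodMk
        ((hasDerivAt_id' r).const_add t) |>.congr_deriv (by simp)
    have hcomp := (hφ _).hasFDerivAt.comp_hasDerivAt r hline
    rwa [fderiv_characteristic_eq_zero hφ hpde] at hcomp
  have hconst :=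
    is_const_of_deriv_eq_zero (fun r => (hψ r).differentiableAt) (fun r => (hψ r).deriv) τ 0
  simpa [ψ] using hconst

theorem hasDerivAt_quadratic (a b c x y : ℝ) :
    HasDerivAt (fun y => a + b * (y - x) + c * (y - x) ^ 2) (b + 2 * c * (y - x)) y := by
  have hlin := (hasDerivAt_id' y).sub_const x
  exact (((hlin.const_mul b).const_add a).add ((hlin.fun_pow 2).const_mul c)).congr_deriv
    (by push_cast; ring)

theorem deriv_sub_taylor_isBigO {f : ℝ → ℝ} (hf : ContDiff ℝ 3 f) (x : ℝ) :
    (fun y => deriv f y - (deriv f x + deriv (deriv f) x * (y - x)))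
      =O[𝓝 x] fun y => (y - x) ^ 2 := by
  have hT := taylor_isLittleO_univ (x₀ := x) (hf.deriv' (n := 2))
  simp only [taylor_within_apply, Finset.sum_range_succ, Finset.sum_range_zero,
    iteratedDerivWithin_univ, iteratedDeriv_succ, iteratedDeriv_zero] at hT
  refine (hT.isBigO.add ((isBigO_refl (fun y => (y - x) ^ 2) _).const_mul_left
    (deriv (deriv (deriv f)) x / 2))).congr_left fun y => ?_
  simp only [Nat.factorial, Nat.cast_one, inv_one, pow_zero, mul_one, smul_eq_mul, one_mul,
    zero_add, Nat.succ_eq_add_one, pow_one, Nat.reduceAdd, Nat.cast_ofNat]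
  ring

/-- The residual of the scheme for the travelling wave with profile `f`, where `s = v τ = C h`
and the value at time `t + τ` at `y` is `f (y - s)`. -/
noncomputable def schemeResidual (f : ℝ → ℝ) (α x h s : ℝ) : ℝ :=
  f (x - s) - f x + s / h * (f (x - s) - f (x - h - s)) -
    s / h / 2 * (α * (f (x - h - s) - f (x - 2 * h - s)) +
      (1 - α) * (f (x - s) - f (x - h - s))) +
    s / h / 2 * (α * (f x - f (x - h)) + (1 - α) * (f (x + h) - f x))

theorem schemeResidual_sub (f g : ℝ → ℝ) (α x h s : ℝ) :
    schemeResidual (f - g) α x h s = schemeResidual f α x h s - schemeResidual g α x h s := by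
  simp only [schemeResidual, Pi.sub_apply]
  ring

theorem schemeResidual_quadratic (a b c x₀ α x : ℝ) {h : ℝ} (hh : h ≠ 0) (s : ℝ) :
    schemeResidual (fun y => a + b * (y - x₀) + c * (y - x₀) ^ 2) α x h s = 0 := by
  simp only [schemeResidual]
  field_simp
  ring

theorem schemeResidual_eq_differences (f : ℝ → ℝ) (α x h s : ℝ) :
    schemeResidual f α x h s = (f (x - s) - f x) + s / h * ((f (x - s) - f (x - h - s)) +
      α / 2 * ((f x - f (x - h)) - (f (x - h - s) - f (x - 2 * h - s))) +
      (1 - α) / 2 * ((f (x + h) - f x) - (f (x - s) - f (x - h - s)))) := by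
  simp only [schemeResidual]
  ring

theorem abs_differences_combination_le {α b d₁ d₂ d₃ d₄ : ℝ} (h₁ : |d₁| ≤ b) (h₂ : |d₂| ≤ b)
    (h₃ : |d₃| ≤ b) (h₄ : |d₄| ≤ b) :
    |d₁ + α / 2 * (d₂ - d₃) + (1 - α) / 2 * (d₄ - d₁)| ≤ (1 + |α| + |1 - α|) * b := by
  calc _ ≤ |d₁| + |α / 2 * (d₂ - d₃)| + |(1 - α) / 2 * (d₄ - d₁)| := abs_add_three _ _ _
    _ = |d₁| + |α| * (|d₂ - d₃| / 2) + |1 - α| * (|d₄ - d₁| / 2) := by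
        rw [abs_mul, abs_mul, abs_div, abs_div, abs_two]; ring
    _ ≤ b + |α| * b + |1 - α| * b := by
        gcongr
        · linarith [abs_sub d₂ d₃]
        · linarith [abs_sub d₄ d₁]
    _ = (1 + |α| + |1 - α|) * b := by ring

theorem abs_schemeResidual_le {g : ℝ → ℝ} {α x h s B : ℝ} (hg : Differentiable ℝ g)
    (hB : ∀ y ∈ closedBall x (2 * |h| + |s|), |deriv g y| ≤ B) :
    |schemeResidual g α x h s| ≤ (2 + |α| + |1 - α|) * B * |s| := by
  set ρ := 2 * |h| + |s|
  have lip : ∀ a ∈ closedBall x ρ, ∀ b ∈ closedBall x ρ, |g a - g b| ≤ B * |a - b| :=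
    fun a ha b hb => (convex_closedBall x ρ).norm_image_sub_le_of_norm_deriv_le
      (fun y _ => hg y) hB hb ha
  have mem : ∀ y, y - x ≤ ρ → x - y ≤ ρ → y ∈ closedBall x ρ := fun y h₁ h₂ => by
    rw [mem_closedBall, Real.dist_eq, abs_le]; constructor <;> linarith
  have hh₁ := le_abs_self h; have hh₂ := neg_abs_le h
  have hs₁ := le_abs_self s; have hs₂ := neg_abs_le s
  have m₀ : x ∈ closedBall x ρ := mem_closedBall_self (by positivity)
  have m₁ : x - h ∈ closedBall x ρ := mem _ (by linarith) (by linarith)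
  have m₂ : x + h ∈ closedBall x ρ := mem _ (by linarith) (by linarith)
  have m₃ : x - s ∈ closedBall x ρ := mem _ (by linarith) (by linarith)
  have m₄ : x - h - s ∈ closedBall x ρ := mem _ (by linarith) (by linarith)
  have m₅ : x - 2 * h - s ∈ closedBall x ρ := mem _ (by linarith) (by linarith)
  have step : ∀ a ∈ closedBall x ρ, ∀ b ∈ closedBall x ρ, a - b = h → |g a - g b| ≤ B * |h| :=
    fun a ha b hb hab => hab ▸ lip a ha b hb
  have hE := abs_differences_combination_le (α := α) (step _ m₃ _ m₄ (by ring))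
    (step _ m₀ _ m₁ (by ring)) (step _ m₄ _ m₅ (by ring)) (step _ m₂ _ m₀ (by ring))
  have hlong : |g (x - s) - g x| ≤ B * |s| := by
    simpa only [sub_sub_cancel_left, abs_neg] using lip _ m₃ _ m₀
  have hB₀ : 0 ≤ B := (abs_nonneg _).trans (hB x m₀)
  have hsh : |s / h| * |h| ≤ |s| := by
    rcases eq_or_ne h 0 with rfl | hh
    · simp
    · rw [abs_div, div_mul_cancel₀ _ (abs_ne_zero.2 hh)]
  rw [schemeResidual_eq_differences]
  calc _ ≤ |g (x - s) - g x| + |s / h| * ((1 + |α| + |1 - α|) * (B * |h|)) := by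
        grw [abs_add_le, abs_mul, hE]
    _ = |g (x - s) - g x| + (1 + |α| + |1 - α|) * B * (|s / h| * |h|) := by ring
    _ ≤ B * |s| + (1 + |α| + |1 - α|) * B * |s| := by gcongr
    _ = (2 + |α| + |1 - α|) * B * |s| := by ring

theorem schemeResidual_isBigO {f : ℝ → ℝ} (hf : ContDiff ℝ 3 f) (α x : ℝ) :
    (fun q : ℝ × ℝ => schemeResidual f α x q.1 q.2)
      =O[𝓝[{q | q.1 ≠ 0}] (0, 0)] fun q => (|q.1| + |q.2|) ^ 3 := by
  obtain ⟨K, hK₀, hK⟩ := (deriv_sub_taylor_isBigO hf x).exists_pos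
  obtain ⟨r, hr, hKr⟩ := nhds_basis_closedBall.eventually_iff.1 hK.bound
  set P : ℝ → ℝ := fun y => f x + deriv f x * (y - x) + deriv (deriv f) x / 2 * (y - x) ^ 2
  have hdf : Differentiable ℝ f := hf.differentiable (by norm_num)
  have hderiv : ∀ y, deriv (f - P) y = deriv f y - (deriv f x + deriv (deriv f) x * (y - x)) :=
    fun y => ((hdf y).hasDerivAt.sub (hasDerivAt_quadratic _ _ _ x y)).deriv.trans (by ring)
  have hsmall : ∀ᶠ q : ℝ × ℝ in 𝓝[{q | q.1 ≠ 0}] (0, 0), 2 * |q.1| + |q.2| ≤ r := by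
    have hρ : Tendsto (fun q : ℝ × ℝ => 2 * |q.1| + |q.2|) (𝓝 (0, 0)) (𝓝 0) :=
      (show Continuous (fun q : ℝ × ℝ => 2 * |q.1| + |q.2|) by fun_prop).tendsto' _ _ (by simp)
    exact (hρ.eventually_le_const hr).filter_mono nhdsWithin_le_nhds
  refine .of_bound ((2 + |α| + |1 - α|) * K * 4) ?_
  filter_upwards [hsmall, self_mem_nhdsWithin] with ⟨h, s⟩ hρr (hh : h ≠ 0)
  have hB : ∀ y ∈ closedBall x (2 * |h| + |s|), |deriv (f - P) y| ≤ K * (2 * |h| + |s|) ^ 2 := by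
    intro y hy
    rw [mem_closedBall, Real.dist_eq] at hy
    rw [hderiv, ← Real.norm_eq_abs]
    refine (hKr (mem_closedBall.2 (hy.trans hρr))).trans ?_
    rw [norm_pow, Real.norm_eq_abs]
    gcongr
  have hR : schemeResidual f α x h s = schemeResidual (f - P) α x h s := by
    rw [schemeResidual_sub, schemeResidual_quadratic _ _ _ _ _ _ hh, sub_zero]
  have hcube : (2 * |h| + |s|) ^ 2 * |s| ≤ 4 * (|h| + |s|) ^ 3 := by
    calc (2 * |h| + |s|) ^ 2 * |s| ≤ (2 * (|h| + |s|)) ^ 2 * (|h| + |s|) := by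
          gcongr <;> linarith [abs_nonneg h, abs_nonneg s]
      _ = 4 * (|h| + |s|) ^ 3 := by ring
  dsimp only
  rw [Real.norm_eq_abs, Real.norm_of_nonneg (by positivity), hR]
  calc _ ≤ (2 + |α| + |1 - α|) * (K * (2 * |h| + |s|) ^ 2) * |s| :=
        abs_schemeResidual_le (hdf.sub (by fun_prop)) hB
    _ = (2 + |α| + |1 - α|) * K * ((2 * |h| + |s|) ^ 2 * |s|) := by ring
    _ ≤ (2 + |α| + |1 - α|) * K * (4 * (|h| + |s|) ^ 3) := by gcongr
    _ = _ := by ring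

theorem semi_implicit_second_order_consistency_general
    (v α : ℝ) (φ : ℝ × ℝ → ℝ) (hφ : ContDiff ℝ 3 φ)
    (hpde : ∀ x t : ℝ,
      deriv (fun s => φ (x, s)) t + v * deriv (fun u => φ (u, t)) x = 0)
    (x t : ℝ) :
    (fun p : ℝ × ℝ =>
        φ (x, t + p.2) - φ (x, t) +
          (v * p.2 / p.1) * (φ (x, t + p.2) - φ (x - p.1, t + p.2)) -
          (v * p.2 / p.1 / 2) *
            (α * (φ (x - p.1, t + p.2) - φ (x - 2 * p.1, t + p.2)) +
              (1 - α) * (φ (x, t + p.2) - φ (x - p.1, t + p.2))) +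
          (v * p.2 / p.1 / 2) *
            (α * (φ (x, t) - φ (x - p.1, t)) +
              (1 - α) * (φ (x + p.1, t) - φ (x, t))))
      =O[nhdsWithin (0, 0) {p : ℝ × ℝ | 0 < p.1 ∧ 0 < p.2}]
      (fun p : ℝ × ℝ => (|p.1| + |p.2|) ^ 3) := by
  have hf : ContDiff ℝ 3 fun y => φ (y, t) := hφ.comp (contDiff_id.prodMk contDiff_const)
  have hmap : Tendsto (fun p : ℝ × ℝ => (p.1, v * p.2))
      (𝓝[{p | 0 < p.1 ∧ 0 < p.2}] (0, 0)) (𝓝[{q | q.1 ≠ 0}] (0, 0)) :=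
    tendsto_nhdsWithin_iff.2
      ⟨((show Continuous fun p : ℝ × ℝ => (p.1, v * p.2) by fun_prop).tendsto' _ _
        (by simp)).mono_left nhdsWithin_le_nhds,
      eventually_nhdsWithin_of_forall fun p hp => hp.1.ne'⟩
  have hcube : (fun p : ℝ × ℝ => (|p.1| + |v * p.2|) ^ 3)
      =O[𝓝[{p | 0 < p.1 ∧ 0 < p.2}] (0, 0)] fun p => (|p.1| + |p.2|) ^ 3 := by
    refine .of_bound ((1 + |v|) ^ 3) (.of_forall fun p => ?_)
    rw [Real.norm_of_nonneg (by positivity), Real.norm_of_nonneg (by positivity), ← mul_pow,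
      abs_mul]
    gcongr
    nlinarith [abs_nonneg v, abs_nonneg p.1, abs_nonneg p.2]
  simp only [transport_time_shift (hφ.differentiable (by norm_num)) hpde]
  exact ((schemeResidual_isBigO hf α x).comp_tendsto hmap).trans hcube

/-- Second-order consistency of the parametric semi-implicit scheme: for a
smooth solution of `∂ₜφ + v∂ₓφ = 0` with constant `v > 0`, Courant number
`C = vτ/h`, and any parameter `α`, the scheme residual at a fixed point
`(x, t)` is `O((|h| + |τ|)³)` as `(h, τ) → (0, 0)` with `h, τ > 0`. -/
theorem semi_implicit_second_order_consistency
    (v α : ℝ) (hv : 0 < v) (φ : ℝ × ℝ → ℝ) (hφ : ContDiff ℝ 3 φ)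
    (hpde : ∀ x t : ℝ,
      deriv (fun s => φ (x, s)) t + v * deriv (fun u => φ (u, t)) x = 0)
    (x t : ℝ) :
    (fun p : ℝ × ℝ =>
        φ (x, t + p.2) - φ (x, t) +
          (v * p.2 / p.1) * (φ (x, t + p.2) - φ (x - p.1, t + p.2)) -
          (v * p.2 / p.1 / 2) *
            (α * (φ (x - p.1, t + p.2) - φ (x - 2 * p.1, t + p.2)) +
              (1 - α) * (φ (x, t + p.2) - φ (x - p.1, t + p.2))) +
          (v * p.2 / p.1 / 2) *
            (α * (φ (x, t) - φ (x - p.1, t)) +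
              (1 - α) * (φ (x + p.1, t) - φ (x, t))))
      =O[nhdsWithin (0, 0) {p : ℝ × ℝ | 0 < p.1 ∧ 0 < p.2}]
      (fun p : ℝ × ℝ => (|p.1| + |p.2|) ^ 3) :=
  semi_implicit_second_order_consistency_general v α φ hφ hpde x t
end
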